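/- Let c ∈ ℂ with Re(c) > 0. For every τ₀ ∈ S_c there exist a neighbourhood V₀ of τ₀ in ℂ and real constants α₁ > 0, α₂ > 0 and α₃ with 2α₂ + α₃ > 0 and 2α₂ − α₃ > 0, such that |K_c(τ, x, y)| ≤ α₁ exp(α₃ x y − α₂(x² + y²)) for all τ ∈ V₀ ∩ S_c and all x, y ∈ ℝ. -/

import Mathlib

open Complex MeasureTheory

/-- The maximal sector `S_c` of the bounded holomorphic semigroup generated by `-H_c`. -/
noncomputable def sector (c : ℂ) : Set ℂ :=
  if 0 < c.im then
    {τ : ℂ | τ ≠ 0 ∧ -(Real.pi / 2) ≤ τ.arg ∧ τ.arg ≤ Real.pi / 2 - c.arg}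
  else if c.im = 0 then
    {τ : ℂ | τ ≠ 0 ∧ -(Real.pi / 2) < τ.arg ∧ τ.arg < Real.pi / 2}
  else
    {τ : ℂ | τ ≠ 0 ∧ -(Real.pi / 2) - c.arg ≤ τ.arg ∧ τ.arg ≤ Real.pi / 2}

/-- `λ = exp(-2 c^{1/2} τ)`. -/
noncomputable def lam (c τ : ℂ) : ℂ := Complex.exp (-2 * c ^ ((1 : ℂ) / 2) * τ)

/-- `w₁ = c^{1/4} λ^{1/2} (π (1 - λ²))^{-1/2}`. -/
noncomputable def w₁ (c τ : ℂ) : ℂ :=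
  c ^ ((1 : ℂ) / 4) * lam c τ ^ ((1 : ℂ) / 2) *
    ((Real.pi : ℂ) * (1 - lam c τ ^ 2)) ^ (-(1 : ℂ) / 2)

/-- `w₂ = c^{1/2} (1 + λ²) / (2 (1 - λ²))`. -/
noncomputable def w₂ (c τ : ℂ) : ℂ :=
  c ^ ((1 : ℂ) / 2) * (1 + lam c τ ^ 2) / (2 * (1 - lam c τ ^ 2))

/-- `w₃ = 2 c^{1/2} λ / (1 - λ²)`. -/
noncomputable def w₃ (c τ : ℂ) : ℂ :=
  2 * c ^ ((1 : ℂ) / 2) * lam c τ / (1 - lam c τ ^ 2)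

/-- The Mehler kernel `K_c(τ, x, y) = w₁ exp(w₃ x y - w₂ (x² + y²))`. -/
noncomputable def mehlerK (c τ : ℂ) (x y : ℝ) : ℂ :=
  w₁ c τ * Complex.exp (w₃ c τ * (x : ℂ) * (y : ℂ) - w₂ c τ * ((x : ℂ) ^ 2 + (y : ℂ) ^ 2))

/-! Put `s = c^{1/2}` and `z = s τ`, so that `λ = e^{-2z}`, `2 w₂ + w₃ = s coth z` and
`2 w₂ - w₃ = s tanh z`, while the real part of the exponent of the kernel is at most
`-(2 Re w₂ - |Re w₃|) (x² + y²) / 2`. On the sector `Re τ ≥ 0` and `Re (c τ) ≥ 0`, which for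
`z = u + i v` means `|Im s · v| ≤ Re s · u`, with `u > 0`. Since `|sin 2v| ≤ 2 |v|` and
`2u < sinh 2u`, this forces `Re (s coth z) > 0` and `Re (s tanh z) > 0`, i.e. the gap
`2 Re w₂ - |Re w₃|` is positive at `τ₀`. As `|λ(τ₀)| < 1`, the gap and `‖w₁‖` are continuous at
`τ₀`, so both stay controlled on a neighbourhood, and `α₃ = 0` works. -/

open Topology
open scoped ComplexConjugate

namespace Complex

lemma re_mul_eq_norm_mul_norm_mul_cos (z w : ℂ) :
    (z * w).re = ‖z‖ * ‖w‖ * Real.cos (z.arg + w.arg) := by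
  rw [Real.cos_add, mul_re, ← norm_mul_cos_arg z, ← norm_mul_sin_arg z,
    ← norm_mul_cos_arg w, ← norm_mul_sin_arg w]
  ring

lemma re_div_pos_of_re_mul_conj_pos {z w : ℂ} (h : 0 < (z * conj w).re) : 0 < (z / w).re := by
  have hw : w ≠ 0 := by rintro rfl; simp at h
  rw [div_re, ← add_div]
  refine div_pos ?_ (normSq_pos.2 hw)
  simpa [mul_re] using h

lemma re_cpow_one_half_pos {c : ℂ} (hc : 0 < c.re) : 0 < (c ^ (1 / 2 : ℂ)).re := by
  have hc₀ : c ≠ 0 := by rintro rfl; simp at hc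
  have harg := abs_lt.1 (abs_arg_lt_pi_div_two_iff.2 (Or.inl hc))
  rw [cpow_def_of_ne_zero hc₀, exp_re]
  have him : (log c * (1 / 2)).im = c.arg / 2 := by simp [log_im, div_eq_mul_inv]
  rw [him]
  have := Real.cos_pos_of_mem_Ioo ⟨by linarith, by linarith⟩ (x := c.arg / 2)
  positivity

lemma cpow_one_half_sq (c : ℂ) : (c ^ (1 / 2 : ℂ)) ^ 2 = c := by
  simp [one_div]

end Complex

/-- `4 u e^{-2u} < 1 - e^{-4u}` is `2u < sinh 2u` multiplied by `2 e^{-2u}`. -/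
lemma Real.four_mul_mul_exp_neg_lt {u : ℝ} (hu : 0 < u) :
    4 * u * Real.exp (-2 * u) < 1 - Real.exp (-2 * u) ^ 2 := by
  have hsinh : 2 * u < Real.sinh (2 * u) := Real.self_lt_sinh_iff.2 (by linarith)
  have hprod : Real.exp (2 * u) * Real.exp (-2 * u) = 1 := by
    rw [← Real.exp_add]; norm_num
  rw [Real.sinh_eq, ← neg_mul] at hsinh
  nlinarith [Real.exp_pos (-2 * u)]

lemma re_mul_one_add_div_one_sub_pos {s L : ℂ}
    (h : |2 * s.im * L.im| < s.re * (1 - normSq L)) : 0 < (s * (1 + L) / (1 - L)).re := by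
  apply re_div_pos_of_re_mul_conj_pos
  have hre : (s * (1 + L) * conj (1 - L)).re = s.re * (1 - normSq L) - 2 * s.im * L.im := by
    simp only [mul_re, mul_im, conj_re, conj_im, add_re, add_im, sub_re, sub_im, one_re, one_im,
      normSq_apply]
    ring
  rw [hre]
  linarith [le_abs_self (2 * s.im * L.im)]

lemma re_mul_one_sub_div_one_add_pos {s L : ℂ}
    (h : |2 * s.im * L.im| < s.re * (1 - normSq L)) : 0 < (s * (1 - L) / (1 + L)).re := by
  simpa [sub_eq_add_neg] using re_mul_one_add_div_one_sub_pos (s := s) (L := -L) (by simpa using h)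

lemma abs_im_mul_im_exp_lt {s z : ℂ} (hs : 0 < s.re) (hz : 0 < z.re)
    (h : |s.im * z.im| ≤ s.re * z.re) :
    |2 * s.im * (Complex.exp (-2 * z)).im| < s.re * (1 - normSq (Complex.exp (-2 * z))) := by
  set E := Real.exp (-2 * z.re)
  have hE : 0 < E := Real.exp_pos _
  have him : (Complex.exp (-2 * z)).im = E * Real.sin (-2 * z.im) := by simp [exp_im, E]
  have hnormSq : normSq (Complex.exp (-2 * z)) = E ^ 2 := by
    rw [normSq_eq_norm_sq, norm_exp]; simp [E]
  have hsin : |Real.sin (-2 * z.im)| ≤ 2 * |z.im| := by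
    simpa [abs_mul] using Real.abs_sin_le_abs (x := -2 * z.im)
  rw [him, hnormSq]
  calc |2 * s.im * (E * Real.sin (-2 * z.im))|
      = 2 * E * (|s.im| * |Real.sin (-2 * z.im)|) := by
        simp only [abs_mul, abs_two, abs_of_pos hE]; ring
    _ ≤ 2 * E * (|s.im| * (2 * |z.im|)) := by gcongr
    _ = 4 * E * |s.im * z.im| := by rw [abs_mul]; ring
    _ ≤ 4 * E * (s.re * z.re) := by gcongr
    _ = s.re * (4 * z.re * E) := by ring
    _ < s.re * (1 - E ^ 2) := mul_lt_mul_of_pos_left (Real.four_mul_mul_exp_neg_lt hz) hs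

lemma re_mul_pos_and_abs_im_mul_im_le {s τ : ℂ} (hs : 0 < s.re) (hτ : 0 ≤ τ.re)
    (hsτ : 0 ≤ (s ^ 2 * τ).re) (hpos : 0 < τ.re ∨ 0 < (s ^ 2 * τ).re) :
    0 < (s * τ).re ∧ |s.im * (s * τ).im| ≤ s.re * (s * τ).re := by
  have hsum : s.re * (s * τ).re + s.im * (s * τ).im = normSq s * τ.re := by
    simp only [mul_re, mul_im, normSq_apply]; ring
  have hdiff : s.re * (s * τ).re - s.im * (s * τ).im = (s ^ 2 * τ).re := by
    simp only [mul_re, mul_im, pow_two]; ring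
  have hnormSq : 0 < normSq s := normSq_pos.2 (by rintro rfl; simp at hs)
  have hτ' := mul_nonneg hnormSq.le hτ
  have hprod : 0 < s.re * (s * τ).re := by
    rcases hpos with h | h
    · nlinarith [mul_pos hnormSq h]
    · linarith
  exact ⟨pos_of_mul_pos_right hprod hs.le, abs_le.2 ⟨by linarith, by linarith⟩⟩

lemma re_nonneg_and_re_mul_nonneg_of_mem_sector {c τ : ℂ} (hc : 0 < c.re) (hτ : τ ∈ sector c) :
    0 ≤ τ.re ∧ 0 ≤ (c * τ).re ∧ (0 < τ.re ∨ 0 < (c * τ).re) := by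
  have hc_arg := abs_lt.1 (abs_arg_lt_pi_div_two_iff.2 (Or.inl hc))
  have hre_mul : |c.arg + τ.arg| ≤ Real.pi / 2 → 0 ≤ (c * τ).re := by
    intro h
    rw [re_mul_eq_norm_mul_norm_mul_cos]
    have := Real.cos_nonneg_of_mem_Icc (abs_le.1 h)
    positivity
  have hpos : τ ≠ 0 → c.im ≠ 0 → 0 ≤ τ.re → 0 ≤ (c * τ).re → 0 < τ.re ∨ 0 < (c * τ).re := by
    intro hne hcim h₁ h₂
    by_contra! hle
    have hτim : τ.im = 0 := by
      have : c.im * τ.im = 0 := by rw [mul_re] at hle h₂; nlinarith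
      exact (mul_eq_zero.1 this).resolve_left hcim
    exact hne (ext (le_antisymm hle.1 h₁) hτim)
  unfold sector at hτ
  split_ifs at hτ with him him'
  · obtain ⟨hne, hlo, hhi⟩ := hτ
    have hc_arg_nonneg := arg_nonneg_iff.2 him.le
    have h₁ : 0 ≤ τ.re := abs_arg_le_pi_div_two_iff.1 (abs_le.2 ⟨hlo, by linarith⟩)
    have h₂ := hre_mul (abs_le.2 ⟨by linarith, by linarith⟩)
    exact ⟨h₁, h₂, hpos hne him.ne' h₁ h₂⟩
  · obtain ⟨hne, hlo, hhi⟩ := hτ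
    have h₁ : 0 < τ.re :=
      (abs_arg_lt_pi_div_two_iff.1 (abs_lt.2 ⟨hlo, hhi⟩)).resolve_right hne
    have h₂ : 0 < (c * τ).re := by rw [mul_re, him', zero_mul, sub_zero]; positivity
    exact ⟨h₁.le, h₂.le, Or.inl h₁⟩
  · obtain ⟨hne, hlo, hhi⟩ := hτ
    have hc_arg_nonpos := (arg_neg_iff.2 (lt_of_le_of_ne (not_lt.1 him) him')).le
    have h₁ : 0 ≤ τ.re := abs_arg_le_pi_div_two_iff.1 (abs_le.2 ⟨by linarith, hhi⟩)
    have h₂ := hre_mul (abs_le.2 ⟨by linarith, by linarith⟩)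
    exact ⟨h₁, h₂, hpos hne him' h₁ h₂⟩

lemma re_cpow_one_half_mul_pos_of_mem_sector {c τ : ℂ} (hc : 0 < c.re) (hτ : τ ∈ sector c) :
    0 < (c ^ (1 / 2 : ℂ) * τ).re ∧
      |(c ^ (1 / 2 : ℂ)).im * (c ^ (1 / 2 : ℂ) * τ).im| ≤
        (c ^ (1 / 2 : ℂ)).re * (c ^ (1 / 2 : ℂ) * τ).re := by
  obtain ⟨h₁, h₂, h₃⟩ := re_nonneg_and_re_mul_nonneg_of_mem_sector hc hτ
  rw [← cpow_one_half_sq c] at h₂ h₃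
  exact re_mul_pos_and_abs_im_mul_im_le (re_cpow_one_half_pos hc) h₁ h₂ h₃

lemma one_sub_ne_zero_and_one_add_ne_zero_of_norm_lt_one {L : ℂ} (hL : ‖L‖ < 1) :
    1 - L ≠ 0 ∧ 1 + L ≠ 0 := by
  constructor <;> intro h
  · have : L = 1 := by linear_combination -h
    simp [this] at hL
  · have : L = -1 := by linear_combination h
    simp [this] at hL

lemma one_sub_sq_ne_zero_of_norm_lt_one {L : ℂ} (hL : ‖L‖ < 1) : 1 - L ^ 2 ≠ 0 := by
  obtain ⟨h₁, h₂⟩ := one_sub_ne_zero_and_one_add_ne_zero_of_norm_lt_one hL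
  rw [show 1 - L ^ 2 = (1 - L) * (1 + L) by ring]
  exact mul_ne_zero h₁ h₂

lemma lam_eq_exp (c τ : ℂ) : lam c τ = Complex.exp (-2 * (c ^ (1 / 2 : ℂ) * τ)) := by
  rw [lam, mul_assoc]

lemma norm_lam_lt_one {c τ : ℂ} (h : 0 < (c ^ (1 / 2 : ℂ) * τ).re) : ‖lam c τ‖ < 1 := by
  rw [lam_eq_exp, norm_exp]
  simpa using h

lemma continuous_lam (c : ℂ) : Continuous (lam c) := by
  unfold lam; fun_prop

lemma two_mul_w₂_add_w₃ {c τ : ℂ} (h₁ : 1 - lam c τ ≠ 0) (h₂ : 1 + lam c τ ≠ 0) :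
    2 * w₂ c τ + w₃ c τ = c ^ (1 / 2 : ℂ) * (1 + lam c τ) / (1 - lam c τ) := by
  rw [w₂, w₃, show 1 - lam c τ ^ 2 = (1 - lam c τ) * (1 + lam c τ) by ring]
  field_simp
  ring

lemma two_mul_w₂_sub_w₃ {c τ : ℂ} (h₁ : 1 - lam c τ ≠ 0) (h₂ : 1 + lam c τ ≠ 0) :
    2 * w₂ c τ - w₃ c τ = c ^ (1 / 2 : ℂ) * (1 - lam c τ) / (1 + lam c τ) := by
  rw [w₂, w₃, show 1 - lam c τ ^ 2 = (1 - lam c τ) * (1 + lam c τ) by ring]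
  field_simp
  ring

lemma abs_re_w₃_lt_two_mul_re_w₂ {c τ : ℂ} (hc : 0 < c.re) (hτ : τ ∈ sector c) :
    |(w₃ c τ).re| < 2 * (w₂ c τ).re := by
  obtain ⟨hu, hle⟩ := re_cpow_one_half_mul_pos_of_mem_sector hc hτ
  have hL := abs_im_mul_im_exp_lt (re_cpow_one_half_pos hc) hu hle
  rw [← lam_eq_exp] at hL
  obtain ⟨h₁, h₂⟩ := one_sub_ne_zero_and_one_add_ne_zero_of_norm_lt_one (norm_lam_lt_one hu)
  have hadd := re_mul_one_add_div_one_sub_pos hL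
  have hsub := re_mul_one_sub_div_one_add_pos hL
  rw [← two_mul_w₂_add_w₃ h₁ h₂] at hadd
  rw [← two_mul_w₂_sub_w₃ h₁ h₂] at hsub
  simp only [add_re, sub_re, mul_re, re_ofNat, im_ofNat, zero_mul, sub_zero] at hadd hsub
  exact abs_lt.2 ⟨by linarith, by linarith⟩

lemma continuousAt_w₂ {c τ : ℂ} (h : 1 - lam c τ ^ 2 ≠ 0) : ContinuousAt (w₂ c) τ := by
  have := continuous_lam c
  unfold w₂
  fun_prop (disch := exact mul_ne_zero two_ne_zero h)

lemma continuousAt_w₃ {c τ : ℂ} (h : 1 - lam c τ ^ 2 ≠ 0) : ContinuousAt (w₃ c) τ := by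
  have := continuous_lam c
  unfold w₃
  fun_prop (disch := exact h)

lemma norm_w₁ (c τ : ℂ) : ‖w₁ c τ‖ = ‖c ^ (1 / 4 : ℂ)‖ * ‖lam c τ‖ ^ (1 / 2 : ℝ) *
    (Real.pi * ‖1 - lam c τ ^ 2‖) ^ (-1 / 2 : ℝ) := by
  rw [w₁, norm_mul, norm_mul, show (1 / 2 : ℂ) = ((1 / 2 : ℝ) : ℂ) by push_cast; ring,
    show (-1 / 2 : ℂ) = ((-1 / 2 : ℝ) : ℂ) by push_cast; ring, norm_cpow_real, norm_cpow_real,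
    norm_mul, norm_real, Real.norm_of_nonneg Real.pi_pos.le]

lemma continuousAt_norm_w₁ {c τ : ℂ} (h : 1 - lam c τ ^ 2 ≠ 0) :
    ContinuousAt (fun τ ↦ ‖w₁ c τ‖) τ := by
  have := continuous_lam c
  simp only [norm_w₁]
  have : Real.pi * ‖1 - lam c τ ^ 2‖ ≠ 0 := mul_ne_zero Real.pi_ne_zero (norm_ne_zero_iff.2 h)
  fun_prop (disch := first | exact Or.inl this | exact Or.inr (by norm_num))

lemma norm_exp_mul_sub_mul_le (p q : ℂ) (x y : ℝ) :
    ‖Complex.exp (q * x * y - p * (x ^ 2 + y ^ 2))‖ ≤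
      Real.exp (-((2 * p.re - |q.re|) / 2 * (x ^ 2 + y ^ 2))) := by
  rw [norm_exp, Real.exp_le_exp]
  have hre : (q * x * y - p * (x ^ 2 + y ^ 2)).re = q.re * x * y - p.re * (x ^ 2 + y ^ 2) := by
    simp [mul_re, pow_two]
  have hxy : q.re * x * y ≤ |q.re| * ((x ^ 2 + y ^ 2) / 2) := by
    calc q.re * x * y ≤ |q.re| * (|x| * |y|) := by
          rw [← abs_mul, ← abs_mul, ← mul_assoc]; exact le_abs_self _
      _ ≤ |q.re| * ((x ^ 2 + y ^ 2) / 2) := by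
          gcongr; nlinarith [sq_abs x, sq_abs y, sq_nonneg (|x| - |y|)]
  rw [hre]
  linarith

lemma norm_mehlerK_le (c τ : ℂ) (x y : ℝ) :
    ‖mehlerK c τ x y‖ ≤
      ‖w₁ c τ‖ * Real.exp (-((2 * (w₂ c τ).re - |(w₃ c τ).re|) / 2 * (x ^ 2 + y ^ 2))) := by
  rw [mehlerK, norm_mul]
  gcongr
  exact norm_exp_mul_sub_mul_le _ _ x y

/-- Local Gaussian bound for the Mehler kernel: around every `τ₀ ∈ S_c` there are a
neighbourhood `V₀` and constants `α₁, α₂ > 0`, `α₃` with `2α₂ ± α₃ > 0` such that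
`|K_c(τ,x,y)| ≤ α₁ exp(α₃ x y - α₂ (x² + y²))` for all `τ ∈ V₀ ∩ S_c` and `x, y ∈ ℝ`. -/
theorem mehlerK_local_gaussian_bound (c : ℂ) (hc : 0 < c.re)
    (τ₀ : ℂ) (hτ₀ : τ₀ ∈ sector c) :
    ∃ V₀ ∈ nhds τ₀, ∃ α₁ α₂ α₃ : ℝ, 0 < α₁ ∧ 0 < α₂ ∧
      0 < 2 * α₂ + α₃ ∧ 0 < 2 * α₂ - α₃ ∧
      ∀ τ ∈ V₀ ∩ sector c, ∀ x y : ℝ,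
        ‖mehlerK c τ x y‖ ≤
          α₁ * Real.exp (α₃ * x * y - α₂ * (x ^ 2 + y ^ 2)) := by
  have hden : 1 - lam c τ₀ ^ 2 ≠ 0 := one_sub_sq_ne_zero_of_norm_lt_one
    (norm_lam_lt_one (re_cpow_one_half_mul_pos_of_mem_sector hc hτ₀).1)
  set gap : ℂ → ℝ := fun τ ↦ 2 * (w₂ c τ).re - |(w₃ c τ).re|
  have hgap₀ : 0 < gap τ₀ := sub_pos.2 (abs_re_w₃_lt_two_mul_re_w₂ hc hτ₀)
  have hgap : ContinuousAt gap τ₀ := by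
    have := continuousAt_w₂ hden
    have := continuousAt_w₃ hden
    fun_prop
  have hV₁ : ∀ᶠ τ in 𝓝 τ₀, ‖w₁ c τ‖ < ‖w₁ c τ₀‖ + 1 :=
    (continuousAt_norm_w₁ hden).eventually_lt_const (lt_add_one _)
  have hV₂ : ∀ᶠ τ in 𝓝 τ₀, gap τ₀ / 2 < gap τ :=
    hgap.eventually_const_lt (half_lt_self hgap₀)
  refine ⟨_, hV₁.and hV₂, ‖w₁ c τ₀‖ + 1, gap τ₀ / 4, 0, by positivity, by positivity,
    by linarith, by linarith, ?_⟩
  rintro τ ⟨⟨hw₁, hgapτ⟩, -⟩ x y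
  calc ‖mehlerK c τ x y‖ ≤ ‖w₁ c τ‖ * Real.exp (-(gap τ / 2 * (x ^ 2 + y ^ 2))) :=
        norm_mehlerK_le c τ x y
    _ ≤ (‖w₁ c τ₀‖ + 1) * Real.exp (0 * x * y - gap τ₀ / 4 * (x ^ 2 + y ^ 2)) := by
        gcongr
        nlinarith [add_nonneg (sq_nonneg x) (sq_nonneg y)]
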